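/- Let Δ_n = n^{1/4}/√π · exp(-√n (x - g)²) dx be a Gaussian density with mean g and variance 1/(2√n). If g = g_n converges in distribution to N(u, s²) with convergence in total variation at rate r_n, then the convolution with Δ_n (the randomized variable) converges in total variation to N(u, s²) at rate O(r_n + n^{-1/4}). -/

import Mathlib

/-!
Write `ν = N(u, s²)` and `Δ_n = N(0, 1/(2√n))`. Then `(μ_n ∗ Δ_n)(A) - ν(A)` is the `Δ_n`-average
over `y` of `(μ_n(A - y) - ν(A - y)) + (ν(A - y) - ν(A))`. The first bracket is at most `r_n` by
hypothesis. The second is at most `|y| / √(2π s²)`: two Gaussian densities with the same variance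
cross only at the midpoint of their means, so translating by `y` moves only the mass of an interval
of length `|y|`, which is at most `|y|` times the peak density. Finally `E|Y| ≤ √(E Y²) = (2√n)^{-1/2} ≤ n^{-1/4}` for `Y ~ Δ_n`.
-/

open MeasureTheory ProbabilityTheory Real Set
open scoped NNReal

namespace MeasureTheory

theorem setIntegral_le_setIntegral_of_nonneg_of_nonpos_compl {α : Type*} [MeasurableSpace α]
    {μ : Measure α} {f : α → ℝ} (hf : Integrable f μ) {s t : Set α}
    (hs : MeasurableSet s) (ht : MeasurableSet t)
    (hpos : ∀ x ∈ s, 0 ≤ f x) (hneg : ∀ x ∉ s, f x ≤ 0) :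
    ∫ x in t, f x ∂μ ≤ ∫ x in s, f x ∂μ := by
  rw [← integral_indicator ht, ← integral_indicator hs]
  refine integral_mono (hf.indicator ht) (hf.indicator hs) fun x => ?_
  by_cases hxs : x ∈ s <;> by_cases hxt : x ∈ t <;> simp [hxs, hxt, hpos, hneg]

theorem Measure.conv_real_apply {G : Type*} [AddMonoid G] [MeasurableSpace G] [MeasurableAdd₂ G]
    (μ Δ : Measure G) [IsFiniteMeasure μ] [IsFiniteMeasure Δ] {s : Set G}
    (hs : MeasurableSet s) :
    (μ ∗ Δ).real s = ∫ y, μ.real ((· + y) ⁻¹' s) ∂Δ := by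
  have hadd : Measurable fun p : G × G => p.1 + p.2 := measurable_add
  rw [measureReal_def, Measure.conv, Measure.map_apply hadd hs,
    Measure.prod_apply_symm (hadd hs)]
  exact (integral_toReal (measurable_measure_prodMk_right (hadd hs)).aemeasurable
    (ae_of_all _ fun _ => measure_lt_top _ _)).symm

theorem abs_conv_real_sub_le {G : Type*} [AddMonoid G] [MeasurableSpace G] [MeasurableAdd₂ G]
    {μ ν Δ : Measure G} [IsProbabilityMeasure μ] [IsProbabilityMeasure ν]
    [IsProbabilityMeasure Δ] {r : ℝ} {φ : G → ℝ} (hφ : Integrable φ Δ)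
    (hTV : ∀ t, MeasurableSet t → |μ.real t - ν.real t| ≤ r) {s : Set G} (hs : MeasurableSet s)
    (hshift : ∀ y, |ν.real ((· + y) ⁻¹' s) - ν.real s| ≤ φ y) :
    |(μ ∗ Δ).real s - ν.real s| ≤ r + ∫ y, φ y ∂Δ := by
  have hmeas : Measurable fun y => μ.real ((· + y) ⁻¹' s) :=
    (measurable_measure_prodMk_right (measurable_add hs)).ennreal_toReal
  have hint : Integrable (fun y => μ.real ((· + y) ⁻¹' s)) Δ :=
    .of_bound hmeas.aestronglyMeasurable 1 (ae_of_all _ fun y => by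
      rw [Real.norm_of_nonneg measureReal_nonneg]; exact measureReal_le_one)
  calc |(μ ∗ Δ).real s - ν.real s|
      = |∫ y, (μ.real ((· + y) ⁻¹' s) - ν.real s) ∂Δ| := by
        rw [Measure.conv_real_apply μ Δ hs, integral_sub hint (integrable_const _),
          integral_const, probReal_univ, one_smul]
    _ ≤ ∫ y, |μ.real ((· + y) ⁻¹' s) - ν.real s| ∂Δ := abs_integral_le_integral_abs
    _ ≤ ∫ y, (r + φ y) ∂Δ := by
        refine integral_mono (hint.sub (integrable_const _)).abs ((integrable_const _).add hφ)
          fun y => (abs_sub_le _ (ν.real ((· + y) ⁻¹' s)) _).trans ?_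
        exact add_le_add (hTV _ (measurable_add_const y hs)) (hshift y)
    _ = r + ∫ y, φ y ∂Δ := by
        rw [integral_add (integrable_const _) hφ, integral_const, probReal_univ, one_smul]

end MeasureTheory

namespace ProbabilityTheory

theorem gaussianPDFReal_le (m : ℝ) (v : ℝ≥0) (x : ℝ) :
    gaussianPDFReal m v x ≤ (√(2 * π * v))⁻¹ := by
  rw [gaussianPDFReal_def]
  refine mul_le_of_le_one_right (by positivity) (exp_le_one_iff.2 ?_)
  exact div_nonpos_of_nonpos_of_nonneg (neg_nonpos.2 (sq_nonneg _)) (by positivity)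

theorem gaussianPDFReal_le_gaussianPDFReal {a b : ℝ} (v : ℝ≥0) {x : ℝ}
    (h : (x - a) ^ 2 ≤ (x - b) ^ 2) : gaussianPDFReal b v x ≤ gaussianPDFReal a v x := by
  simp only [gaussianPDFReal_def]
  gcongr

theorem gaussianReal_real_apply (m : ℝ) {v : ℝ≥0} (hv : v ≠ 0) (s : Set ℝ) :
    (gaussianReal m v).real s = ∫ x in s, gaussianPDFReal m v x := by
  rw [measureReal_def, gaussianReal_apply_eq_integral m hv,
    ENNReal.toReal_ofReal (integral_nonneg fun x => gaussianPDFReal_nonneg m v x)]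

theorem gaussianReal_real_Ioc_le (m : ℝ) {v : ℝ≥0} (hv : v ≠ 0) {x y : ℝ} (hxy : x ≤ y) :
    (gaussianReal m v).real (Ioc x y) ≤ (y - x) * (√(2 * π * v))⁻¹ := by
  rw [gaussianReal_real_apply m hv]
  have := norm_setIntegral_le_of_norm_le_const (μ := volume) (f := gaussianPDFReal m v)
    (measure_Ioc_lt_top (a := x) (b := y)) fun z _ => by
      rw [Real.norm_of_nonneg (gaussianPDFReal_nonneg m v z)]; exact gaussianPDFReal_le m v z
  rw [Real.volume_real_Ioc_of_le hxy, mul_comm] at this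
  exact (le_abs_self _).trans this

theorem integral_abs_gaussianReal_le (v : ℝ≥0) :
    ∫ x, |x| ∂gaussianReal 0 v ≤ √v := by
  have hsq : ∫ x, x ^ 2 ∂gaussianReal 0 v = v := by
    have := variance_eq_sub (memLp_id_gaussianReal (μ := 0) (v := v) 2)
    simp only [variance_id_gaussianReal] at this
    simpa using this.symm
  have hvar := variance_nonneg (|id|) (gaussianReal 0 v)
  rw [variance_eq_sub (memLp_id_gaussianReal (μ := 0) (v := v) 2).abs] at hvar
  refine Real.le_sqrt_of_sq_le ?_
  simp only [Pi.pow_apply, Pi.abs_apply, id, sq_abs] at hvar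
  linarith

theorem gaussianReal_real_preimage_add_const (m y : ℝ) {v : ℝ≥0} {s : Set ℝ}
    (hs : MeasurableSet s) :
    (gaussianReal m v).real ((· + y) ⁻¹' s) = (gaussianReal (m + y) v).real s := by
  rw [← map_measureReal_apply (measurable_add_const y) hs, gaussianReal_map_add_const]

theorem gaussianReal_real_sub_le_of_le {v : ℝ≥0} (hv : v ≠ 0) {a b : ℝ} (hab : a ≤ b)
    {s : Set ℝ} (hs : MeasurableSet s) :
    (gaussianReal a v).real s - (gaussianReal b v).real s ≤ (b - a) * (√(2 * π * v))⁻¹ := by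
  set m := (a + b) / 2
  have hdiff : ∀ t, (gaussianReal a v).real t - (gaussianReal b v).real t
      = ∫ x in t, (gaussianPDFReal a v x - gaussianPDFReal b v x) := fun t => by
    rw [gaussianReal_real_apply a hv, gaussianReal_real_apply b hv,
      integral_sub (integrable_gaussianPDFReal a v).integrableOn
        (integrable_gaussianPDFReal b v).integrableOn]
  have hshift : (gaussianReal b v).real (Iic m) = (gaussianReal a v).real (Iic (m - (b - a))) := by
    rw [← preimage_add_const_Iic, gaussianReal_real_preimage_add_const _ _ measurableSet_Iic,
      add_sub_cancel]
  calc (gaussianReal a v).real s - (gaussianReal b v).real s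
      ≤ (gaussianReal a v).real (Iic m) - (gaussianReal b v).real (Iic m) := by
        rw [hdiff, hdiff]
        refine setIntegral_le_setIntegral_of_nonneg_of_nonpos_compl
          ((integrable_gaussianPDFReal a v).sub (integrable_gaussianPDFReal b v))
          measurableSet_Iic hs (fun x hx => ?_) (fun x hx => ?_)
        · have : x ≤ (a + b) / 2 := hx
          exact sub_nonneg.2 (gaussianPDFReal_le_gaussianPDFReal v
            (by nlinarith [mul_nonneg (sub_nonneg.2 hab) (sub_nonneg.2 this)]))
        · have : (a + b) / 2 ≤ x := (not_le.1 hx).le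
          exact sub_nonpos.2 (gaussianPDFReal_le_gaussianPDFReal v
            (by nlinarith [mul_nonneg (sub_nonneg.2 hab) (sub_nonneg.2 this)]))
    _ = (gaussianReal a v).real (Ioc (m - (b - a)) m) := by
        rw [hshift, ← Iic_sdiff_Iic, measureReal_sdiff (Iic_subset_Iic.2 (by linarith))
          measurableSet_Iic]
    _ ≤ (b - a) * (√(2 * π * v))⁻¹ := by
        simpa using gaussianReal_real_Ioc_le a hv (x := m - (b - a)) (y := m) (by linarith)

theorem gaussianReal_real_sub_le {v : ℝ≥0} (hv : v ≠ 0) (a b : ℝ) {s : Set ℝ}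
    (hs : MeasurableSet s) :
    (gaussianReal a v).real s - (gaussianReal b v).real s ≤ |a - b| * (√(2 * π * v))⁻¹ := by
  rcases le_total a b with hab | hab
  · rw [abs_sub_comm, abs_of_nonneg (sub_nonneg.2 hab)]
    exact gaussianReal_real_sub_le_of_le hv hab hs
  · have := gaussianReal_real_sub_le_of_le hv hab hs.compl
    simp only [measureReal_compl hs, probReal_univ] at this
    rw [abs_of_nonneg (sub_nonneg.2 hab)]
    linarith

theorem abs_gaussianReal_real_sub_le {v : ℝ≥0} (hv : v ≠ 0) (a b : ℝ) {s : Set ℝ}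
    (hs : MeasurableSet s) :
    |(gaussianReal a v).real s - (gaussianReal b v).real s| ≤ |a - b| * (√(2 * π * v))⁻¹ :=
  abs_sub_le_iff.2 ⟨gaussianReal_real_sub_le hv a b hs,
    abs_sub_comm a b ▸ gaussianReal_real_sub_le hv b a hs⟩

end ProbabilityTheory

theorem sqrt_toNNReal_one_div_two_sqrt_le {x : ℝ} (hx : 0 < x) :
    √((1 / (2 * √x)).toNNReal : ℝ) ≤ x ^ (-(1 : ℝ) / 4) := by
  rw [Real.coe_toNNReal _ (by positivity)]
  calc √(1 / (2 * √x)) ≤ √(√x)⁻¹ := by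
        gcongr
        rw [one_div]
        exact inv_anti₀ (by positivity) (by linarith [Real.sqrt_pos.2 hx])
    _ = x ^ (-(1 : ℝ) / 4) := by
        rw [Real.sqrt_inv, Real.sqrt_eq_rpow, Real.sqrt_eq_rpow, ← Real.rpow_mul hx.le,
          ← Real.rpow_neg hx.le]
        norm_num

/-- Gaussian smoothing preserves total-variation convergence: if the laws `μ n` of `g_n`
converge in total variation to `N(u, s²)` at rate `r n`, then the laws obtained by
convolving with the Gaussian kernel `Δ_n` of mean `0` and variance `1/(2√n)`
(i.e. smoothing `g_n` with the density `n^{1/4}/√π · exp(-√n (x-g)²)`)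
converge in total variation to `N(u, s²)` at rate `O(r n + n^{-1/4})`. -/
theorem stmt8 (u : ℝ) (s : ℝ) (hs : 0 < s)
    (μ : ℕ → Measure ℝ) (hprob : ∀ n, IsProbabilityMeasure (μ n))
    (r : ℕ → ℝ) (hr : ∀ n, 0 ≤ r n)
    (hTV : ∀ n, ∀ A : Set ℝ, MeasurableSet A →
      |(μ n A).toReal - (gaussianReal u ⟨s ^ 2, sq_nonneg s⟩ A).toReal| ≤ r n) :
    ∃ C > (0 : ℝ), ∀ n : ℕ, 1 ≤ n → ∀ A : Set ℝ, MeasurableSet A →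
      |(((μ n).conv (gaussianReal 0 (Real.toNNReal (1 / (2 * Real.sqrt n))))) A).toReal
          - (gaussianReal u ⟨s ^ 2, sq_nonneg s⟩ A).toReal|
        ≤ C * (r n + (n : ℝ) ^ (-(1 : ℝ) / 4)) := by
  set v : ℝ≥0 := ⟨s ^ 2, sq_nonneg s⟩
  have hv : v ≠ 0 := by rw [← NNReal.coe_ne_zero]; exact (pow_pos hs 2).ne'
  set c := (√(2 * π * v))⁻¹
  refine ⟨1 + c, by positivity, fun n hn A hA => ?_⟩
  have hn0 : (0 : ℝ) < n := Nat.cast_pos.2 hn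
  have hmoment : ∫ y, c * |y| ∂gaussianReal 0 (1 / (2 * √n)).toNNReal
      ≤ c * (n : ℝ) ^ (-(1 : ℝ) / 4) := by
    rw [integral_const_mul]
    gcongr
    exact (integral_abs_gaussianReal_le _).trans (sqrt_toNNReal_one_div_two_sqrt_le hn0)
  have := hprob n
  have hconv := abs_conv_real_sub_le (Δ := gaussianReal 0 (1 / (2 * √n)).toNNReal)
    ((memLp_id_gaussianReal 1).integrable le_rfl |>.abs.const_mul c) (hTV n) hA
    fun y => by
      have := abs_gaussianReal_real_sub_le hv (u + y) u hA
      rwa [add_sub_cancel_left, mul_comm, ← gaussianReal_real_preimage_add_const u y hA] at this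
  calc _ ≤ r n + c * (n : ℝ) ^ (-(1 : ℝ) / 4) := hconv.trans (add_le_add_right hmoment _)
    _ ≤ (1 + c) * (r n + (n : ℝ) ^ (-(1 : ℝ) / 4)) := by
        nlinarith [hr n, Real.rpow_nonneg hn0.le (-(1 : ℝ) / 4), show 0 ≤ c by positivity]
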